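/- For every integer P ≥ 1, set L = 2^P. For all sequences y, ρ : ℕ → ℝ and every integer t with 1 ≤ t ≤ L: ∑_{j=1}^{t} y_j · ρ_{t−j} = y_t · ρ_0 + ∑_{i=1}^{t−1} c_i, where c_i = ∑_{j=i−U_i+1}^{i} y_j · ρ_{t−j} if t ≤ i + U_i and c_i = 0 otherwise, with U_i = 2^{ν₂(i)}. -/

import Mathlib

/-!
Every cell `(j, t)` with `1 ≤ j < t` lies in exactly one gray tile, so the tile contributions to
column `t` add up to `∑_{j < t} y_j ρ_{t-j}`. The tile is that of the `i ∈ [j, t - 1]` of largest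
2-adic valuation: `i ∓ 2^ν₂(i)` are multiples of `2^(ν₂(i)+1)`, hence lie outside `[j, t - 1]`,
which says exactly that the tile of `i` contains the cell. It is unique because two tiles
containing the cell have indices within less than the smaller tile size of each other, while
both indices are multiples of it.
-/

open Finset

def tileSize (i : ℕ) : ℕ := 2 ^ padicValNat 2 i

/-- The gray tile of iteration `i` has rows `[i - tileSize i + 1, i]` and columns
`[i + 1, i + tileSize i]`. -/
def InTile (i j t : ℕ) : Prop :=
  i < j + tileSize i ∧ j ≤ i ∧ i < t ∧ t ≤ i + tileSize i

lemma tileSize_dvd (i : ℕ) : tileSize i ∣ i := pow_padicValNat_dvd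

lemma exists_odd_eq_tileSize_mul {i : ℕ} (hi : i ≠ 0) : ∃ m, Odd m ∧ i = tileSize i * m := by
  obtain ⟨m, hm⟩ := tileSize_dvd i
  refine ⟨m, Nat.not_even_iff_odd.mp fun ⟨n, hn⟩ =>
    pow_succ_padicValNat_not_dvd (p := 2) hi ⟨n, ?_⟩, hm⟩
  nth_rw 1 [hm]
  rw [hn, tileSize, pow_succ]
  ring

lemma two_mul_tileSize_dvd_add {i : ℕ} (hi : i ≠ 0) : 2 * tileSize i ∣ i + tileSize i := by
  obtain ⟨m, ⟨n, rfl⟩, hm⟩ := exists_odd_eq_tileSize_mul hi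
  generalize tileSize i = U at hm ⊢
  exact ⟨n + 1, by rw [hm]; ring⟩

lemma two_mul_tileSize_dvd_sub {i : ℕ} (hi : i ≠ 0) : 2 * tileSize i ∣ i - tileSize i := by
  obtain ⟨m, ⟨n, rfl⟩, hm⟩ := exists_odd_eq_tileSize_mul hi
  generalize tileSize i = U at hm ⊢
  exact ⟨n, by rw [hm, Nat.mul_add_one, Nat.add_sub_cancel]; ring⟩

lemma padicValNat_lt_of_two_mul_tileSize_dvd {i n : ℕ} (hn : n ≠ 0) (h : 2 * tileSize i ∣ n) :
    padicValNat 2 i < padicValNat 2 n := by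
  rw [tileSize, ← pow_succ', padicValNat_dvd_iff_le hn] at h
  omega

lemma eq_of_dvd_of_lt_add {a i i' : ℕ} (hi : a ∣ i) (hi' : a ∣ i') (h : i < i' + a)
    (h' : i' < i + a) : i = i' := by
  obtain ⟨p, rfl⟩ := hi
  obtain ⟨q, rfl⟩ := hi'
  rw [← Nat.mul_add_one] at h h'
  have := Nat.lt_of_mul_lt_mul_left h
  have := Nat.lt_of_mul_lt_mul_left h'
  rw [show p = q by omega]

lemma InTile.unique {i i' j t : ℕ} (h : InTile i j t) (h' : InTile i' j t) : i = i' := by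
  wlog hle : padicValNat 2 i ≤ padicValNat 2 i' generalizing i i'
  · exact (this h' h (le_of_not_ge hle)).symm
  have hdvd : tileSize i ∣ i' := (pow_dvd_pow 2 hle).trans (tileSize_dvd i')
  obtain ⟨hij, -, -, hti⟩ := h
  obtain ⟨-, hji', hi't, -⟩ := h'
  exact eq_of_dvd_of_lt_add (tileSize_dvd i) hdvd (by omega) (by omega)

lemma exists_inTile {j t : ℕ} (hj : 1 ≤ j) (hjt : j < t) : ∃ i, InTile i j t := by
  obtain ⟨i, hi, hmax⟩ := (Icc j (t - 1)).exists_max_image (padicValNat 2)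
    ⟨j, mem_Icc.mpr ⟨le_rfl, by omega⟩⟩
  have hi0 : i ≠ 0 := by rw [mem_Icc] at hi; omega
  have not_dvd : ∀ n ∈ Icc j (t - 1), ¬ 2 * tileSize i ∣ n := fun n hn hdvd =>
    (hmax n hn).not_gt (padicValNat_lt_of_two_mul_tileSize_dvd (by rw [mem_Icc] at hn; omega) hdvd)
  rw [mem_Icc] at hi
  refine ⟨i, ?_, hi.1, by omega, ?_⟩
  · by_contra h
    exact not_dvd (i - tileSize i) (mem_Icc.mpr ⟨by omega, by omega⟩) (two_mul_tileSize_dvd_sub hi0)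
  · by_contra h
    exact not_dvd (i + tileSize i) (mem_Icc.mpr ⟨by omega, by omega⟩) (two_mul_tileSize_dvd_add hi0)

lemma sum_covering_tile_sums {M : Type*} [AddCommMonoid M] (f : ℕ → M) (t : ℕ) :
    ∑ i ∈ Icc 1 (t - 1),
      (if t ≤ i + tileSize i then ∑ j ∈ Icc (i - tileSize i + 1) i, f j else 0)
      = ∑ j ∈ Icc 1 (t - 1), f j := by
  classical
  have tile_sum_eq : ∀ i ∈ Icc 1 (t - 1),
      (if t ≤ i + tileSize i then ∑ j ∈ Icc (i - tileSize i + 1) i, f j else 0)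
        = ∑ j ∈ Icc 1 (t - 1), if InTile i j t then f j else 0 := by
    intro i hi
    rw [mem_Icc] at hi
    rw [← sum_filter]
    split_ifs with hc
    · congr 1
      ext j
      rw [mem_filter, mem_Icc, mem_Icc, InTile]
      omega
    · refine (sum_eq_zero fun j hj => ?_).symm
      rw [mem_filter, InTile] at hj
      omega
  rw [sum_congr rfl tile_sum_eq, sum_comm]
  refine sum_congr rfl fun j hj => ?_
  rw [mem_Icc] at hj
  obtain ⟨i, hi⟩ := exists_inTile (t := t) hj.1 (by omega)
  have hi_mem : i ∈ Icc 1 (t - 1) := by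
    obtain ⟨-, hji, hit, -⟩ := hi
    exact mem_Icc.mpr ⟨by omega, by omega⟩
  rw [sum_eq_single_of_mem i hi_mem
    fun i' _ hne => if_neg fun h' => hne (h'.unique hi), if_pos hi]

theorem relaxed_interpolation_correct_general (y ρ : ℕ → ℝ) (t : ℕ)
    (ht1 : 1 ≤ t) :
    (∑ j ∈ Finset.Icc 1 t, y j * ρ (t - j))
      = y t * ρ 0 +
        ∑ i ∈ Finset.Icc 1 (t - 1),
          (if t ≤ i + 2 ^ (padicValNat 2 i) then
            ∑ j ∈ Finset.Icc (i - 2 ^ (padicValNat 2 i) + 1) i, y j * ρ (t - j)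
          else 0) := by
  obtain ⟨n, rfl⟩ := Nat.exists_eq_add_of_le' ht1
  rw [sum_Icc_succ_top (by omega), Nat.sub_self, add_comm]
  congr 1
  exact (sum_covering_tile_sums (fun j => y j * ρ (n + 1 - j)) (n + 1)).symm

/-- Correctness of the relaxed interpolation algorithm: the causal convolution value
`z_t = ∑_{j=1}^{t} y_j ρ_{t-j}` equals the red-cell term `y_t ρ_0` plus the accumulated
gray-tile contributions `c_i` to column `t`, where `c_i` is the contribution of the
input range `[i - U_i + 1, i]` if the tile of iteration `i` covers column `t`
(i.e. `t ≤ i + U_i`, with `U_i = 2 ^ ν₂ i`) and `0` otherwise. -/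
theorem relaxed_interpolation_correct (P : ℕ) (hP : 1 ≤ P) (y ρ : ℕ → ℝ) (t : ℕ)
    (ht1 : 1 ≤ t) (ht2 : t ≤ 2 ^ P) :
    (∑ j ∈ Finset.Icc 1 t, y j * ρ (t - j))
      = y t * ρ 0 +
        ∑ i ∈ Finset.Icc 1 (t - 1),
          (if t ≤ i + 2 ^ (padicValNat 2 i) then
            ∑ j ∈ Finset.Icc (i - 2 ^ (padicValNat 2 i) + 1) i, y j * ρ (t - j)
          else 0) :=
  relaxed_interpolation_correct_general y ρ t ht1
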